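/- arXiv:1409.4126 — 4 statements merged into one kernel-verified Lean document; each statement's English description precedes it below -/
import Mathlib

section
/- Let n ≥ 1 and let T : 𝔻 → B(ℂⁿ) assign to each point of the open unit disc a bounded linear operator on ℂⁿ. Suppose that for every holomorphic function f : 𝔻 → ℂⁿ with ∫_𝔻 ‖f(z)‖² dA(z) < ∞, both functions z ↦ T(z)(f(z)) and z ↦ (T(z))*(f(z)) are holomorphic on 𝔻. Then T is constant: there exists a single bounded operator A on ℂⁿ such that T(λ) = A for all λ ∈ 𝔻. (This is the content of the lemma that a decomposable operator on L²(𝔻, ℂⁿ) commuting with the projection onto the Bergman space L²_a(𝔻, ℂⁿ) is a constant.) -/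
/-!
Testing the hypotheses on constant functions, `z ↦ ⟪w, T z v⟫` is holomorphic and so is its
conjugate `z ↦ ⟪v, (T z)† w⟫`. A holomorphic function whose conjugate is holomorphic has zero
derivative, hence is constant on the connected disc.
-/

open MeasureTheory Metric
open scoped ENNReal ComplexConjugate InnerProductSpace

theorem Complex.deriv_eq_zero_of_differentiableAt_conj {f : ℂ → ℂ} {z : ℂ}
    (hf : DifferentiableAt ℂ f z) (hf_conj : DifferentiableAt ℂ (fun w => conj (f w)) z) :
    deriv f z = 0 := by
  set d := deriv f z
  set c := deriv (fun w => conj (f w)) z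
  -- The real derivative of `conj ∘ f` is `h ↦ conj (d * h)`; it must also be `h ↦ c * h`.
  have hreal : HasFDerivAt (fun w => conj (f w))
      (conjCLE.toContinuousLinearMap.comp
        ((ContinuousLinearMap.smulRight (1 : ℂ →L[ℂ] ℂ) d).restrictScalars ℝ)) z :=
    conjCLE.hasFDerivAt.comp z (hf.hasDerivAt.hasFDerivAt.restrictScalars ℝ)
  have hcomplex := hf_conj.hasDerivAt.hasFDerivAt.restrictScalars ℝ
  have heq := congrArg DFunLike.coe (hreal.unique hcomplex)
  have h_one : conj d = c := by simpa using congrFun heq 1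
  have h_I : -(Complex.I * conj d) = Complex.I * c := by simpa using congrFun heq Complex.I
  rw [h_one] at h_I
  have hc : c = 0 := by linear_combination Complex.I / 2 * h_I + c * Complex.I_sq
  simpa [hc] using congrArg conj h_one

theorem IsOpen.is_const_of_differentiableOn_conj {f : ℂ → ℂ} {U : Set ℂ} (hU : IsOpen U)
    (hU' : IsPreconnected U) (hf : DifferentiableOn ℂ f U)
    (hf_conj : DifferentiableOn ℂ (fun w => conj (f w)) U) {x y : ℂ} (hx : x ∈ U) (hy : y ∈ U) :
    f x = f y :=
  hU.is_const_of_deriv_eq_zero hU' hf (fun _ hz =>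
    Complex.deriv_eq_zero_of_differentiableAt_conj (hf.differentiableAt (hU.mem_nhds hz))
      (hf_conj.differentiableAt (hU.mem_nhds hz))) hx hy

theorem IsOpen.eq_of_differentiableOn_apply_of_differentiableOn_adjoint_apply
    {E F : Type*} [NormedAddCommGroup E] [InnerProductSpace ℂ E] [CompleteSpace E]
    [NormedAddCommGroup F] [InnerProductSpace ℂ F] [CompleteSpace F]
    {T : ℂ → E →L[ℂ] F} {U : Set ℂ} (hU : IsOpen U) (hU' : IsPreconnected U)
    (hT : ∀ v, DifferentiableOn ℂ (fun z => T z v) U)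
    (hT_adj : ∀ w, DifferentiableOn ℂ (fun z => (T z).adjoint w) U)
    {x y : ℂ} (hx : x ∈ U) (hy : y ∈ U) : T x = T y := by
  refine ContinuousLinearMap.ext fun v => ext_inner_left ℂ fun w => ?_
  have hconj : (fun z => conj ⟪w, T z v⟫_ℂ) = fun z => ⟪v, (T z).adjoint w⟫_ℂ := by
    ext z
    rw [ContinuousLinearMap.adjoint_inner_right, inner_conj_symm]
  refine hU.is_const_of_differentiableOn_conj (f := fun z => ⟪w, T z v⟫_ℂ) hU' ?_ ?_ hx hy
  · exact (innerSL ℂ w).differentiable.comp_differentiableOn (hT v)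
  · rw [hconj]
    exact (innerSL ℂ v).differentiable.comp_differentiableOn (hT_adj w)

theorem stmt2_general (n : ℕ)
    (T : ℂ → (EuclideanSpace ℂ (Fin n) →L[ℂ] EuclideanSpace ℂ (Fin n)))
    (hT : ∀ f : ℂ → EuclideanSpace ℂ (Fin n),
      DifferentiableOn ℂ f (ball (0 : ℂ) 1) →
      (∫⁻ z in ball (0 : ℂ) 1, (‖f z‖₊ : ℝ≥0∞) ^ 2) < ⊤ →
      DifferentiableOn ℂ (fun z => T z (f z)) (ball (0 : ℂ) 1))
    (hTadj : ∀ f : ℂ → EuclideanSpace ℂ (Fin n),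
      DifferentiableOn ℂ f (ball (0 : ℂ) 1) →
      (∫⁻ z in ball (0 : ℂ) 1, (‖f z‖₊ : ℝ≥0∞) ^ 2) < ⊤ →
      DifferentiableOn ℂ (fun z => ContinuousLinearMap.adjoint (T z) (f z)) (ball (0 : ℂ) 1)) :
    ∃ A : EuclideanSpace ℂ (Fin n) →L[ℂ] EuclideanSpace ℂ (Fin n),
      ∀ lam ∈ ball (0 : ℂ) 1, T lam = A := by
  have hconst_sq_integrable (v : EuclideanSpace ℂ (Fin n)) :
      (∫⁻ _ in ball (0 : ℂ) 1, (‖v‖₊ : ℝ≥0∞) ^ 2) < ⊤ := by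
    rw [setLIntegral_const]
    exact ENNReal.mul_lt_top (by simp) measure_ball_lt_top
  refine ⟨T 0, fun lam hlam => ?_⟩
  exact isOpen_ball.eq_of_differentiableOn_apply_of_differentiableOn_adjoint_apply
    (convex_ball 0 1).isPreconnected
    (fun v => hT _ (differentiableOn_const v) (hconst_sq_integrable v))
    (fun w => hTadj _ (differentiableOn_const w) (hconst_sq_integrable w))
    hlam (mem_ball_self one_pos)

/-- If `T : 𝔻 → B(ℂⁿ)` is such that for every `ℂⁿ`-valued Bergman-space
function `f` both `z ↦ T(z)(f(z))` and `z ↦ T(z)*(f(z))` are holomorphic on the disc,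
then `T` is constant on the disc. -/
theorem stmt2 (n : ℕ) (hn : 1 ≤ n)
    (T : ℂ → (EuclideanSpace ℂ (Fin n) →L[ℂ] EuclideanSpace ℂ (Fin n)))
    (hT : ∀ f : ℂ → EuclideanSpace ℂ (Fin n),
      DifferentiableOn ℂ f (ball (0 : ℂ) 1) →
      (∫⁻ z in ball (0 : ℂ) 1, (‖f z‖₊ : ℝ≥0∞) ^ 2) < ⊤ →
      DifferentiableOn ℂ (fun z => T z (f z)) (ball (0 : ℂ) 1))
    (hTadj : ∀ f : ℂ → EuclideanSpace ℂ (Fin n),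
      DifferentiableOn ℂ f (ball (0 : ℂ) 1) →
      (∫⁻ z in ball (0 : ℂ) 1, (‖f z‖₊ : ℝ≥0∞) ^ 2) < ⊤ →
      DifferentiableOn ℂ (fun z => ContinuousLinearMap.adjoint (T z) (f z)) (ball (0 : ℂ) 1)) :
    ∃ A : EuclideanSpace ℂ (Fin n) →L[ℂ] EuclideanSpace ℂ (Fin n),
      ∀ lam ∈ ball (0 : ℂ) 1, T lam = A :=
  stmt2_general n T hT hTadj
end

section
/- Let B be a finite Blaschke product of order n and let U be a nonempty open connected subset of 𝔻. Let σ and τ be holomorphic functions on U with σ(U) ⊆ 𝔻 and τ(U) ⊆ 𝔻 satisfying B(σ(z)) = z and B(τ(z)) = z for every z ∈ U (i.e. σ and τ are holomorphic inverses of B on U). If σ ≠ τ, then their images are disjoint: σ(U) ∩ τ(U) = ∅. -/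
open Metric

/-- A finite Blaschke product of order `n`: on the unit disc, `B` is given by
`B(z) = e^{iθ} ∏_{k=1}^{n} (z - a_k)/(1 - conj(a_k) z)` with `a_1, …, a_n ∈ 𝔻`. -/
def IsBlaschke (n : ℕ) (B : ℂ → ℂ) : Prop :=
  ∃ (θ : ℝ) (a : Fin n → ℂ), (∀ k, a k ∈ Metric.ball (0 : ℂ) 1) ∧
    ∀ z ∈ Metric.ball (0 : ℂ) 1,
      B z = Complex.exp (θ * Complex.I) *
        ∏ k, (z - a k) / (1 - (starRingEnd ℂ) (a k) * z)

/-!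
If `σ z₁ = τ z₂`, applying `B` gives `z₁ = z₂ =: z`. Differentiating `B ∘ σ = id` shows
`B' (σ z) ≠ 0`, so `B` is injective near `σ z = τ z`; hence `B ∘ σ = B ∘ τ` forces `σ = τ`
near `z`, and the identity theorem propagates this to the connected set `U`.
-/

open Filter Topology

lemma one_sub_conj_mul_ne_zero {a z : ℂ} (ha : ‖a‖ < 1) (hz : ‖z‖ < 1) :
    1 - (starRingEnd ℂ) a * z ≠ 0 := by
  have hlt : ‖(starRingEnd ℂ) a * z‖ < 1 := by
    rw [norm_mul, RCLike.norm_conj]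
    nlinarith [norm_nonneg a, norm_nonneg z]
  intro h
  rw [← sub_eq_zero.1 h, norm_one] at hlt
  exact lt_irrefl _ hlt

theorem IsBlaschke.differentiableOn {n : ℕ} {B : ℂ → ℂ} (hB : IsBlaschke n B) :
    DifferentiableOn ℂ B (ball (0 : ℂ) 1) := by
  obtain ⟨θ, a, ha, hBeq⟩ := hB
  refine DifferentiableOn.congr ?_ hBeq
  refine (DifferentiableOn.fun_finsetProd fun k _ => ?_).const_mul _
  refine (differentiableOn_id.sub_const _).div (by fun_prop) fun z hz => ?_
  exact one_sub_conj_mul_ne_zero (mem_ball_zero_iff.1 (ha k)) (mem_ball_zero_iff.1 hz)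

section LocalInverse

variable {𝕜 : Type*} [NontriviallyNormedField 𝕜]

lemma HasDerivAt.ne_zero_of_eventually_comp_eq_id {f σ : 𝕜 → 𝕜} {f' : 𝕜} {z : 𝕜}
    (hf : HasDerivAt f f' (σ z)) (hσ : DifferentiableAt 𝕜 σ z)
    (hinv : ∀ᶠ y in 𝓝 z, f (σ y) = y) : f' ≠ 0 := by
  have hid : HasDerivAt (f ∘ σ) 1 z := (hasDerivAt_id z).congr_of_eventuallyEq hinv
  exact left_ne_zero_of_mul_eq_one ((hf.comp z hσ.hasDerivAt).unique hid)

lemma HasStrictDerivAt.eventuallyEq_of_eventually_comp_eq [CompleteSpace 𝕜]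
    {X : Type*} [TopologicalSpace X] {f : 𝕜 → 𝕜} {f' a : 𝕜}
    (hf : HasStrictDerivAt f f' a) (hf' : f' ≠ 0) {σ τ : X → 𝕜} {x : X}
    (hσ : Tendsto σ (𝓝 x) (𝓝 a)) (hτ : Tendsto τ (𝓝 x) (𝓝 a))
    (h : ∀ᶠ y in 𝓝 x, f (σ y) = f (τ y)) : σ =ᶠ[𝓝 x] τ := by
  have hleft := hf.eventually_left_inverse hf'
  filter_upwards [hσ.eventually hleft, hτ.eventually hleft, h] with y hσy hτy hy
  rw [← hσy, ← hτy, hy]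

end LocalInverse

theorem stmt4_general (n : ℕ) (B : ℂ → ℂ) (hB : IsBlaschke n B)
    (U : Set ℂ) (hUo : IsOpen U) (hUc : IsConnected U)
    (σ τ : ℂ → ℂ)
    (hσd : DifferentiableOn ℂ σ U) (hσm : Set.MapsTo σ U (ball (0 : ℂ) 1))
    (hσinv : ∀ z ∈ U, B (σ z) = z)
    (hτd : DifferentiableOn ℂ τ U)
    (hτinv : ∀ z ∈ U, B (τ z) = z)
    (hne : ¬ Set.EqOn σ τ U) :
    σ '' U ∩ τ '' U = ∅ := by
  refine Set.eq_empty_iff_forall_notMem.2 ?_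
  rintro _ ⟨⟨z, hz, rfl⟩, z', hz', hτσ⟩
  obtain rfl : z = z' := by rw [← hσinv z hz, ← hτσ, hτinv z' hz']
  have hU : U ∈ 𝓝 z := hUo.mem_nhds hz
  have hBσ : AnalyticAt ℂ B (σ z) :=
    hB.differentiableOn.analyticAt (isOpen_ball.mem_nhds (hσm hz))
  have hB' : deriv B (σ z) ≠ 0 :=
    hBσ.differentiableAt.hasDerivAt.ne_zero_of_eventually_comp_eq_id
      (hσd.differentiableAt hU) (eventually_of_mem hU hσinv)
  have hloc : σ =ᶠ[𝓝 z] τ := by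
    refine hBσ.hasStrictDerivAt.eventuallyEq_of_eventually_comp_eq hB'
      (hσd.differentiableAt hU).continuousAt.tendsto ?_ ?_
    · simpa only [hτσ] using (hτd.differentiableAt hU).continuousAt.tendsto
    · filter_upwards [hU] with y hy
      rw [hσinv y hy, hτinv y hy]
  exact hne ((hσd.analyticOnNhd hUo).eqOn_of_preconnected_of_eventuallyEq
    (hτd.analyticOnNhd hUo) hUc.isPreconnected hz hloc)

/-- Two distinct holomorphic inverses `σ, τ` of a finite Blaschke product `B`
on a nonempty open connected set `U ⊆ 𝔻` have disjoint images. -/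
theorem stmt4 (n : ℕ) (B : ℂ → ℂ) (hB : IsBlaschke n B)
    (U : Set ℂ) (hUsub : U ⊆ ball (0 : ℂ) 1) (hUo : IsOpen U) (hUc : IsConnected U)
    (σ τ : ℂ → ℂ)
    (hσd : DifferentiableOn ℂ σ U) (hσm : Set.MapsTo σ U (ball (0 : ℂ) 1))
    (hσinv : ∀ z ∈ U, B (σ z) = z)
    (hτd : DifferentiableOn ℂ τ U) (hτm : Set.MapsTo τ U (ball (0 : ℂ) 1))
    (hτinv : ∀ z ∈ U, B (τ z) = z)
    (hne : ¬ Set.EqOn σ τ U) :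
    σ '' U ∩ τ '' U = ∅ :=
  stmt4_general n B hB U hUo hUc σ τ hσd hσm hσinv hτd hτinv hne
end

section
/- Let B be a finite Blaschke product of order n ≥ 1, let D_B ⊆ 𝔻 be a nonempty open connected set, and let σ₁, …, σₙ : D_B → 𝔻 be holomorphic functions satisfying B(σᵢ(z)) = z for all z ∈ D_B and all i, whose images σ₁(D_B), …, σₙ(D_B) are pairwise disjoint and whose union covers 𝔻 up to a Lebesgue null set (i.e. 𝔻 ∖ ⋃_{i=1}^{n} σᵢ(D_B) has area measure zero). Then for all holomorphic f, g : 𝔻 → ℂ with ∫_𝔻 |f|² dA < ∞ and ∫_𝔻 |g|² dA < ∞, one has ∑_{i=1}^{n} ∫_{D_B} f(σᵢ(z)) · conj(g(σᵢ(z))) · |σᵢ′(z)|² dA(z) = ∫_𝔻 f(w) · conj(g(w)) dA(w). (This is the inner-product-preservation step showing that the map f ↦ ((f∘σᵢ)·σᵢ′)_{i=1}^{n} is an isometry, used to prove that the Bergman-space multiplication operator T_B is unitarily equivalent to a generalized Bergman bundle shift.) -/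
open MeasureTheory Metric
open scoped ENNReal

lemma Complex.det_restrictScalars_smulRight_one (c : ℂ) :
    (((1 : ℂ →L[ℂ] ℂ).smulRight c).restrictScalars ℝ).det = Complex.normSq c := by
  have h : ((((1 : ℂ →L[ℂ] ℂ).smulRight c).restrictScalars ℝ : ℂ →L[ℝ] ℂ) : ℂ →ₗ[ℝ] ℂ)
      = Algebra.lmul ℝ ℂ c := by
    ext z
    simp [mul_comm]
  rw [ContinuousLinearMap.det, h, ← Algebra.norm_apply, Algebra.norm_complex_apply]

theorem integral_image_eq_integral_norm_deriv_sq_smul {E : Type*} [NormedAddCommGroup E]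
    [NormedSpace ℝ E] {U : Set ℂ} {φ : ℂ → ℂ} (hU : IsOpen U) (hφ : DifferentiableOn ℂ φ U)
    (hinj : Set.InjOn φ U) (F : ℂ → E) :
    ∫ w in φ '' U, F w = ∫ z in U, ‖deriv φ z‖ ^ 2 • F (φ z) := by
  have hderiv : ∀ z ∈ U, HasFDerivWithinAt φ
      (((1 : ℂ →L[ℂ] ℂ).smulRight (deriv φ z)).restrictScalars ℝ) U z := fun z hz =>
    (((hφ z hz).differentiableAt (hU.mem_nhds hz)).hasDerivAt.hasFDerivAt.restrictScalars
      ℝ).hasFDerivWithinAt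
  rw [integral_image_eq_integral_abs_det_fderiv_smul volume hU.measurableSet hderiv hinj]
  simp only [Complex.det_restrictScalars_smulRight_one, Complex.normSq_eq_norm_sq, abs_sq]

theorem MeasureTheory.memLp_two_of_lintegral_nnnorm_sq_lt_top {α E : Type*} [MeasurableSpace α]
    {μ : Measure α} [NormedAddCommGroup E] {f : α → E} (hf : AEStronglyMeasurable f μ)
    (h : ∫⁻ x, (‖f x‖₊ : ℝ≥0∞) ^ 2 ∂μ < ⊤) : MemLp f 2 μ := by
  refine ⟨hf,
    (eLpNorm_lt_top_iff_lintegral_rpow_enorm_lt_top two_ne_zero ENNReal.ofNat_ne_top).2 ?_⟩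
  simpa [enorm_eq_nnnorm] using h

theorem MeasureTheory.MemLp.integrable_mul_conj {α : Type*} [MeasurableSpace α] {μ : Measure α}
    {f g : α → ℂ} (hf : MemLp f 2 μ) (hg : MemLp g 2 μ) :
    Integrable (fun x => f x * (starRingEnd ℂ) (g x)) μ :=
  hf.integrable_mul hg.star

theorem sum_setIntegral_eq_setIntegral_of_iUnion_ae_eq {X E ι : Type*} [MeasurableSpace X]
    [NormedAddCommGroup E] [NormedSpace ℝ E] [Fintype ι] {μ : Measure X} {F : X → E}
    {s : ι → Set X} {t : Set X} (hs : ∀ i, MeasurableSet (s i))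
    (hdisj : Pairwise (Function.onFun Disjoint s)) (hst : (⋃ i, s i) =ᵐ[μ] t)
    (hF : IntegrableOn F t μ) :
    ∑ i, ∫ x in s i, F x ∂μ = ∫ x in t, F x ∂μ := by
  have hF' : IntegrableOn F (⋃ i, s i) μ := hF.congr_set_ae hst
  rw [← integral_iUnion_fintype hs hdisj fun i => hF'.mono_set (Set.subset_iUnion s i),
    setIntegral_congr_set hst]

theorem stmt12_general (n : ℕ) (B : ℂ → ℂ) (DB : Set ℂ) (ho : IsOpen DB)
    (σ : Fin n → ℂ → ℂ)
    (hdiff : ∀ i, DifferentiableOn ℂ (σ i) DB)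
    (hmaps : ∀ i, Set.MapsTo (σ i) DB (ball (0 : ℂ) 1))
    (hinv : ∀ i, ∀ z ∈ DB, B (σ i z) = z)
    (hdisj : ∀ i j, i ≠ j → σ i '' DB ∩ σ j '' DB = ∅)
    (hcover : volume (ball (0 : ℂ) 1 \ ⋃ i, σ i '' DB) = 0)
    (f g : ℂ → ℂ)
    (hf : DifferentiableOn ℂ f (ball (0 : ℂ) 1))
    (hg : DifferentiableOn ℂ g (ball (0 : ℂ) 1))
    (hf2 : (∫⁻ z in ball (0 : ℂ) 1, (‖f z‖₊ : ℝ≥0∞) ^ 2) < ⊤)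
    (hg2 : (∫⁻ z in ball (0 : ℂ) 1, (‖g z‖₊ : ℝ≥0∞) ^ 2) < ⊤) :
    ∑ i : Fin n, ∫ z in DB,
        f (σ i z) * (starRingEnd ℂ) (g (σ i z)) * (‖deriv (σ i) z‖ : ℂ) ^ 2 =
      ∫ w in ball (0 : ℂ) 1, f w * (starRingEnd ℂ) (g w) := by
  have hinj : ∀ i, Set.InjOn (σ i) DB := fun i x hx y hy h => by
    rw [← hinv i x hx, ← hinv i y hy, h]
  have hcover_ae : (⋃ i, σ i '' DB) =ᵐ[volume] ball (0 : ℂ) 1 := by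
    have hsub : (⋃ i, σ i '' DB) ⊆ ball (0 : ℂ) 1 :=
      Set.iUnion_subset fun i => (hmaps i).image_subset
    exact ae_eq_set.2 ⟨by simp [Set.sdiff_eq_empty.2 hsub], hcover⟩
  have hL2 {h : ℂ → ℂ} (hh : DifferentiableOn ℂ h (ball (0 : ℂ) 1))
      (hh2 : (∫⁻ z in ball (0 : ℂ) 1, (‖h z‖₊ : ℝ≥0∞) ^ 2) < ⊤) :
      MemLp h 2 (volume.restrict (ball (0 : ℂ) 1)) :=
    memLp_two_of_lintegral_nnnorm_sq_lt_top
      (hh.continuousOn.aestronglyMeasurable measurableSet_ball) hh2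
  rw [← sum_setIntegral_eq_setIntegral_of_iUnion_ae_eq
    (fun i => ho.measurableSet.image_of_continuousOn_injOn (hdiff i).continuousOn (hinj i))
    (fun i j hij => Set.disjoint_iff_inter_eq_empty.2 (hdisj i j hij)) hcover_ae
    ((hL2 hf hf2).integrable_mul_conj (hL2 hg hg2))]
  refine Finset.sum_congr rfl fun i _ => ?_
  rw [integral_image_eq_integral_norm_deriv_sq_smul ho (hdiff i) (hinj i)]
  refine setIntegral_congr_fun ho.measurableSet fun z _ => ?_
  simp only [Complex.real_smul]
  push_cast
  ring

/-- If `σ₁, …, σₙ` are holomorphic inverses of a Blaschke product `B` of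
order `n ≥ 1` on a nonempty open connected set `D_B ⊆ 𝔻`, with pairwise disjoint images
covering `𝔻` up to a Lebesgue null set, then for all Bergman-space functions `f, g` on `𝔻`,
`∑ᵢ ∫_{D_B} f(σᵢ z) conj(g(σᵢ z)) |σᵢ′(z)|² dA(z) = ∫_𝔻 f conj g dA`. -/
theorem stmt12 (n : ℕ) (hn : 1 ≤ n) (B : ℂ → ℂ) (hB : IsBlaschke n B)
    (DB : Set ℂ) (hsub : DB ⊆ ball (0 : ℂ) 1) (hne : DB.Nonempty)
    (ho : IsOpen DB) (hc : IsConnected DB)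
    (σ : Fin n → ℂ → ℂ)
    (hdiff : ∀ i, DifferentiableOn ℂ (σ i) DB)
    (hmaps : ∀ i, Set.MapsTo (σ i) DB (ball (0 : ℂ) 1))
    (hinv : ∀ i, ∀ z ∈ DB, B (σ i z) = z)
    (hdisj : ∀ i j, i ≠ j → σ i '' DB ∩ σ j '' DB = ∅)
    (hcover : volume (ball (0 : ℂ) 1 \ ⋃ i, σ i '' DB) = 0)
    (f g : ℂ → ℂ)
    (hf : DifferentiableOn ℂ f (ball (0 : ℂ) 1))
    (hg : DifferentiableOn ℂ g (ball (0 : ℂ) 1))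
    (hf2 : (∫⁻ z in ball (0 : ℂ) 1, (‖f z‖₊ : ℝ≥0∞) ^ 2) < ⊤)
    (hg2 : (∫⁻ z in ball (0 : ℂ) 1, (‖g z‖₊ : ℝ≥0∞) ^ 2) < ⊤) :
    ∑ i : Fin n, ∫ z in DB,
        f (σ i z) * (starRingEnd ℂ) (g (σ i z)) * (‖deriv (σ i) z‖ : ℂ) ^ 2 =
      ∫ w in ball (0 : ℂ) 1, f w * (starRingEnd ℂ) (g w) :=
  stmt12_general n B DB ho σ hdiff hmaps hinv hdisj hcover f g hf hg hf2 hg2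
end

section
/- Let n ≥ 1 and 0 ≤ i ≤ n − 1. For every holomorphic function f : 𝔻 → ℂ, one has the identity (in [0, ∞]) n · ∫_𝔻 |z|^{2i} |f(zⁿ)|² dA(z) = ∫_𝔻 |f(w)|² · |w|^{−2(n−i−1)/n} dA(w). In particular, the map f ↦ √n · zⁱ f(zⁿ) is an isometry from the weighted Bergman space of holomorphic functions f on 𝔻 with ∫_𝔻 |f(w)|² |w|^{−2(n−i−1)/n} dA(w) < ∞ into the Bergman space L²_a(𝔻); this realizes the restriction of the multiplication operator T_{zⁿ} on L²_a(𝔻) to its reducing subspace spanned by {z^l : l ≡ i mod n} as multiplication by z on a weighted Bergman space. -/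
/-!
In logarithmic coordinates `z = exp w` the punctured unit disc is the half-strip
`Re w < 0, 0 < Im w ≤ 2π`, and the area element becomes `|exp w|² dA(w)`. Pulled back this way,
the weighted integrand `|f(w)|² |w|^(-2(n-i-1)/n)` becomes a `2πi`-periodic function `Ψ`, and the
integrand `|z|^(2i) |f(zⁿ)|²` becomes `w ↦ Ψ (n w)`, since
`|exp w|^(2n - 2(n-i-1)) = |exp w|^(2i+2)`.
Scaling by `n` maps the strip of height `2π` onto the one of height `2πn` with Jacobian `n²`, and by
periodicity the latter carries `n` times the integral of `Ψ` over the former; so `n²` times the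
left integral equals `n` times the right one. The change-of-variables formula for lower integrals
holds for arbitrary integrands, so no measurability of `f` is needed.
-/

open MeasureTheory Metric Complex Set
open scoped ENNReal Real

def leftHalfStrip (a b : ℝ) : Set ℂ := re ⁻¹' Iio 0 ∩ im ⁻¹' Ioc a b

section leftHalfStrip

variable {a b c : ℝ}

theorem measurableSet_leftHalfStrip : MeasurableSet (leftHalfStrip a b) :=
  (measurable_re measurableSet_Iio).inter (measurable_im measurableSet_Ioc)

theorem leftHalfStrip_union_leftHalfStrip (hab : a ≤ b) (hbc : b ≤ c) :
    leftHalfStrip a b ∪ leftHalfStrip b c = leftHalfStrip a c := by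
  rw [leftHalfStrip, leftHalfStrip, leftHalfStrip, ← inter_union_distrib_left, ← preimage_union,
    Ioc_union_Ioc_eq_Ioc hab hbc]

theorem disjoint_leftHalfStrip : Disjoint (leftHalfStrip a b) (leftHalfStrip b c) :=
  ((Ioc_disjoint_Ioc_of_le le_rfl).preimage im).mono inter_subset_right inter_subset_right

theorem image_add_mul_I_leftHalfStrip (t : ℝ) :
    (fun w => w + t * I) '' leftHalfStrip a b = leftHalfStrip (a + t) (b + t) := by
  ext w
  simp [leftHalfStrip, image_add_right]

theorem image_ofReal_mul_leftHalfStrip (hc : 0 < c) :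
    (fun w => (c : ℂ) * w) '' leftHalfStrip a b = leftHalfStrip (c * a) (c * b) := by
  ext z
  simp only [leftHalfStrip, mem_image, mem_inter_iff, mem_preimage, mem_Iio, mem_Ioc]
  constructor
  · rintro ⟨w, ⟨hre, ha, hb⟩, rfl⟩
    simp only [re_ofReal_mul, im_ofReal_mul]
    exact ⟨mul_neg_of_pos_of_neg hc hre, by gcongr, by gcongr⟩
  · rintro ⟨hre, ha, hb⟩
    refine ⟨(c⁻¹ : ℝ) * z, ?_, by simp [hc.ne']⟩
    simp only [re_ofReal_mul, im_ofReal_mul]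
    refine ⟨mul_neg_of_pos_of_neg (inv_pos.mpr hc) hre, ?_, ?_⟩
    · rwa [lt_inv_mul_iff₀ hc]
    · rwa [inv_mul_le_iff₀ hc]

theorem injOn_exp_leftHalfStrip : InjOn exp (leftHalfStrip a (a + 2 * π)) := by
  intro w₁ hw₁ w₂ hw₂ he
  obtain ⟨m, hm⟩ := exp_eq_exp_iff_exists_int.mp he
  have him : w₁.im = w₂.im + m • (2 * π) := by simpa [zsmul_eq_mul] using congrArg im hm
  have hmod := toIocMod_add_zsmul Real.two_pi_pos a w₂.im m
  rw [← him, (toIocMod_eq_self _).mpr hw₁.2, (toIocMod_eq_self _).mpr hw₂.2] at hmod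
  exact Complex.ext (by simpa using congrArg re hm) hmod

theorem exp_image_leftHalfStrip : exp '' leftHalfStrip a (a + 2 * π) = ball 0 1 \ {0} := by
  ext z
  constructor
  · rintro ⟨w, hw, rfl⟩
    exact ⟨by simpa [norm_exp] using hw.1, exp_ne_zero w⟩
  · rintro ⟨hz, hz0 : z ≠ 0⟩
    set k := toIocDiv Real.two_pi_pos a (arg z) with hk
    refine ⟨log z - k * (2 * π * I), ⟨?_, ?_⟩, ?_⟩
    · simpa [log_re] using Real.log_neg (norm_pos_iff.mpr hz0) (mem_ball_zero_iff.mp hz)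
    · have him : (log z - k * (2 * π * I)).im = toIocMod Real.two_pi_pos a (arg z) := by
        rw [← self_sub_toIocDiv_zsmul, ← hk]
        simp [log_im, zsmul_eq_mul]
      simpa [him] using toIocMod_mem_Ioc Real.two_pi_pos a (arg z)
    · rw [exp_sub, exp_log hz0, exp_int_mul_two_pi_mul_I, div_one]

end leftHalfStrip

theorem lintegral_image_eq_lintegral_enorm_deriv_sq_mul {s : Set ℂ} {g g' : ℂ → ℂ}
    (hs : MeasurableSet s) (hg : ∀ w ∈ s, HasDerivWithinAt g (g' w) s w) (hinj : InjOn g s)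
    (G : ℂ → ℝ≥0∞) :
    ∫⁻ z in g '' s, G z = ∫⁻ w in s, ‖g' w‖ₑ ^ 2 * G (g w) := by
  rw [lintegral_image_eq_lintegral_abs_det_fderiv_mul volume hs
    (fun w hw => (hg w hw).hasFDerivWithinAt.restrictScalars ℝ) hinj G]
  refine setLIntegral_congr_fun hs fun w _ => ?_
  simp [ContinuousLinearMap.det, LinearMap.det_restrictScalars, Algebra.norm_complex_eq,
    Complex.normSq_eq_norm_sq]

theorem setLIntegral_image_add (c : ℂ) {s : Set ℂ} (hs : MeasurableSet s) (G : ℂ → ℝ≥0∞) :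
    ∫⁻ z in (fun w => w + c) '' s, G z = ∫⁻ w in s, G (w + c) := by
  simpa using lintegral_image_eq_lintegral_enorm_deriv_sq_mul hs
    (fun w _ => ((hasDerivAt_id w).add_const c).hasDerivWithinAt) (add_left_injective c).injOn G

theorem setLIntegral_image_mul {c : ℂ} (hc : c ≠ 0) {s : Set ℂ} (hs : MeasurableSet s)
    (G : ℂ → ℝ≥0∞) :
    ∫⁻ z in (fun w => c * w) '' s, G z = ‖c‖ₑ ^ 2 * ∫⁻ w in s, G (c * w) := by
  rw [lintegral_image_eq_lintegral_enorm_deriv_sq_mul (g' := fun _ => c) hs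
    (fun w _ => (hasDerivAt_const_mul c).hasDerivWithinAt) (mul_right_injective₀ hc).injOn G,
    lintegral_const_mul' _ _ (ENNReal.pow_ne_top enorm_ne_top)]

theorem setLIntegral_ball_eq_setLIntegral_leftHalfStrip (a : ℝ) (G : ℂ → ℝ≥0∞) :
    ∫⁻ z in ball 0 1, G z = ∫⁻ w in leftHalfStrip a (a + 2 * π), ‖exp w‖ₑ ^ 2 * G (exp w) := by
  rw [← setLIntegral_congr (sdiff_null_ae_eq_self (measure_singleton 0)),
    ← exp_image_leftHalfStrip,
    lintegral_image_eq_lintegral_enorm_deriv_sq_mul measurableSet_leftHalfStrip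
      (fun w _ => (hasDerivAt_exp w).hasDerivWithinAt) injOn_exp_leftHalfStrip]

theorem setLIntegral_leftHalfStrip_nat_mul {Ψ : ℂ → ℝ≥0∞} {h : ℝ} (hh : 0 ≤ h)
    (hΨ : Function.Periodic Ψ (h * I)) (k : ℕ) :
    ∫⁻ w in leftHalfStrip 0 (k * h), Ψ w = k * ∫⁻ w in leftHalfStrip 0 h, Ψ w := by
  induction k with
  | zero => simp [leftHalfStrip]
  | succ k ih =>
    have hper : ∀ w, Ψ (w + (k * h : ℝ) * I) = Ψ w := fun w => by
      simpa [mul_assoc] using hΨ.nat_mul k w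
    have hshift := image_add_mul_I_leftHalfStrip (a := 0) (b := h) (k * h)
    rw [zero_add, add_comm h] at hshift
    rw [Nat.cast_succ, add_one_mul,
      ← leftHalfStrip_union_leftHalfStrip (b := k * h) (by positivity) (by linarith),
      lintegral_union measurableSet_leftHalfStrip disjoint_leftHalfStrip, ih, ← hshift,
      setLIntegral_image_add _ measurableSet_leftHalfStrip, lintegral_congr hper, Nat.cast_succ,
      add_one_mul]

theorem ENNReal.pow_sq_mul_rpow_neg_eq {t : ℝ≥0∞} (h0 : t ≠ 0) (htop : t ≠ ⊤) {n : ℕ}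
    (hn : n ≠ 0) (i : ℕ) :
    (t ^ n) ^ 2 * (t ^ n) ^ (-(2 * ((n : ℝ) - i - 1) / n)) = t ^ 2 * t ^ (2 * i) := by
  rw [← pow_mul, ← pow_add, ← ENNReal.rpow_natCast t n, ← ENNReal.rpow_mul,
    ← ENNReal.rpow_natCast, ← ENNReal.rpow_natCast, ← ENNReal.rpow_add _ _ h0 htop]
  congr 1
  field_simp
  push_cast
  ring

theorem natCast_mul_setLIntegral_ball_comp_pow (n : ℕ) (hn : n ≠ 0) (i : ℕ) (f : ℂ → ℂ) :
    (n : ℝ≥0∞) * ∫⁻ z in ball (0 : ℂ) 1, ‖z‖ₑ ^ (2 * i) * ‖f (z ^ n)‖ₑ ^ 2 =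
      ∫⁻ w in ball (0 : ℂ) 1, ‖f w‖ₑ ^ 2 * ‖w‖ₑ ^ (-(2 * ((n : ℝ) - i - 1) / n)) := by
  set L := ∫⁻ z in ball (0 : ℂ) 1, ‖z‖ₑ ^ (2 * i) * ‖f (z ^ n)‖ₑ ^ 2
  set R := ∫⁻ w in ball (0 : ℂ) 1, ‖f w‖ₑ ^ 2 * ‖w‖ₑ ^ (-(2 * ((n : ℝ) - i - 1) / n))
  set Ψ : ℂ → ℝ≥0∞ :=
    (fun w => ‖w‖ₑ ^ 2 * (‖f w‖ₑ ^ 2 * ‖w‖ₑ ^ (-(2 * ((n : ℝ) - i - 1) / n)))) ∘ exp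
  have hR : R = ∫⁻ u in leftHalfStrip 0 (2 * π), Ψ u := by
    rw [← zero_add (2 * π)]
    exact setLIntegral_ball_eq_setLIntegral_leftHalfStrip 0 _
  have hL : L = ∫⁻ w in leftHalfStrip 0 (2 * π),
      ‖exp w‖ₑ ^ 2 * (‖exp w‖ₑ ^ (2 * i) * ‖f (exp w ^ n)‖ₑ ^ 2) := by
    rw [← zero_add (2 * π)]
    exact setLIntegral_ball_eq_setLIntegral_leftHalfStrip 0 _
  have hscale : ∫⁻ u in leftHalfStrip 0 (n * (2 * π)), Ψ u = (n : ℝ≥0∞) ^ 2 * L := by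
    have hn_pos : (0 : ℝ) < n := by positivity
    rw [← mul_zero (n : ℝ), ← image_ofReal_mul_leftHalfStrip hn_pos,
      setLIntegral_image_mul (by exact_mod_cast hn) measurableSet_leftHalfStrip, hL]
    congr 1
    · rw [ofReal_natCast, enorm_eq_nnnorm, Complex.nnnorm_natCast, ENNReal.coe_natCast]
    refine lintegral_congr fun w => ?_
    have ht0 : ‖exp w‖ₑ ≠ 0 := enorm_ne_zero.mpr (exp_ne_zero w)
    simp only [Ψ, Function.comp_apply, ofReal_natCast, exp_nat_mul, enorm_pow]
    rw [mul_left_comm, ENNReal.pow_sq_mul_rpow_neg_eq ht0 enorm_ne_top hn]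
    ring
  have htile : ∫⁻ u in leftHalfStrip 0 (n * (2 * π)), Ψ u = n * R := by
    rw [hR]
    exact setLIntegral_leftHalfStrip_nat_mul Real.two_pi_pos.le
      (by push_cast; exact exp_periodic.comp _) n
  rw [← ENNReal.mul_right_inj (Nat.cast_ne_zero.mpr hn) (ENNReal.natCast_ne_top n), ← htile,
    hscale, ← mul_assoc, sq]

theorem enorm_sqrt_natCast_mul_pow_mul_sq (n i : ℕ) (z w : ℂ) :
    ‖(Real.sqrt n : ℂ) * z ^ i * w‖ₑ ^ 2 = n * (‖z‖ₑ ^ (2 * i) * ‖w‖ₑ ^ 2) := by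
  have hsqrt : ‖(Real.sqrt n : ℂ)‖ₑ ^ 2 = n := by
    rw [← ofReal_norm, ← ENNReal.ofReal_pow (norm_nonneg _), norm_real, Real.norm_eq_abs,
      sq_abs, Real.sq_sqrt n.cast_nonneg, ENNReal.ofReal_natCast]
  rw [enorm_mul, enorm_mul, mul_pow, mul_pow, hsqrt, enorm_pow, ← pow_mul, mul_comm i, mul_assoc]

theorem mapsTo_pow_ball_zero_one {n : ℕ} (hn : n ≠ 0) :
    MapsTo (fun z : ℂ => z ^ n) (ball 0 1) (ball 0 1) := fun z hz => by
  simpa using pow_lt_one₀ (norm_nonneg z) (mem_ball_zero_iff.mp hz) hn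

theorem stmt13_general (n : ℕ) (hn : 1 ≤ n) (i : ℕ)
    (f : ℂ → ℂ) (hf : DifferentiableOn ℂ f (ball (0 : ℂ) 1)) :
    (n : ℝ≥0∞) *
        ∫⁻ z in ball (0 : ℂ) 1, (‖z‖₊ : ℝ≥0∞) ^ (2 * i) * (‖f (z ^ n)‖₊ : ℝ≥0∞) ^ 2 =
      (∫⁻ w in ball (0 : ℂ) 1,
        (‖f w‖₊ : ℝ≥0∞) ^ 2 * (‖w‖₊ : ℝ≥0∞) ^ (-(2 * ((n : ℝ) - i - 1) / n))) ∧
    DifferentiableOn ℂ (fun z => (Real.sqrt n : ℂ) * z ^ i * f (z ^ n)) (ball (0 : ℂ) 1) ∧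
    ((∫⁻ w in ball (0 : ℂ) 1,
        (‖f w‖₊ : ℝ≥0∞) ^ 2 * (‖w‖₊ : ℝ≥0∞) ^ (-(2 * ((n : ℝ) - i - 1) / n))) < ⊤ →
      ∫⁻ z in ball (0 : ℂ) 1, (‖(Real.sqrt n : ℂ) * z ^ i * f (z ^ n)‖₊ : ℝ≥0∞) ^ 2 =
        ∫⁻ w in ball (0 : ℂ) 1,
          (‖f w‖₊ : ℝ≥0∞) ^ 2 * (‖w‖₊ : ℝ≥0∞) ^ (-(2 * ((n : ℝ) - i - 1) / n))) := by
  have hn0 : n ≠ 0 := Nat.one_le_iff_ne_zero.mp hn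
  have key := natCast_mul_setLIntegral_ball_comp_pow n hn0 i f
  refine ⟨key, ?_, fun _ => ?_⟩
  · exact ((differentiableOn_const _).mul (differentiable_pow i).differentiableOn).mul
      (hf.comp (differentiable_pow n).differentiableOn (mapsTo_pow_ball_zero_one hn0))
  · refine Eq.trans ?_ key
    rw [← lintegral_const_mul' _ _ (ENNReal.natCast_ne_top n)]
    exact lintegral_congr fun z => enorm_sqrt_natCast_mul_pow_mul_sq n i z (f (z ^ n))

/-- For `n ≥ 1`, `0 ≤ i ≤ n - 1` and every holomorphic `f : 𝔻 → ℂ`, one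
has (in `[0,∞]`) `n ∫_𝔻 |z|^{2i} |f(zⁿ)|² dA(z) = ∫_𝔻 |f(w)|² |w|^{-2(n-i-1)/n} dA(w)`.
In particular `f ↦ √n ⋅ zⁱ f(zⁿ)` is an isometry from the weighted Bergman space with
weight `|w|^{-2(n-i-1)/n}` into the Bergman space `L²ₐ(𝔻)`. -/
theorem stmt13 (n : ℕ) (hn : 1 ≤ n) (i : ℕ) (hi : i ≤ n - 1)
    (f : ℂ → ℂ) (hf : DifferentiableOn ℂ f (ball (0 : ℂ) 1)) :
    (n : ℝ≥0∞) *
        ∫⁻ z in ball (0 : ℂ) 1, (‖z‖₊ : ℝ≥0∞) ^ (2 * i) * (‖f (z ^ n)‖₊ : ℝ≥0∞) ^ 2 =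
      (∫⁻ w in ball (0 : ℂ) 1,
        (‖f w‖₊ : ℝ≥0∞) ^ 2 * (‖w‖₊ : ℝ≥0∞) ^ (-(2 * ((n : ℝ) - i - 1) / n))) ∧
    DifferentiableOn ℂ (fun z => (Real.sqrt n : ℂ) * z ^ i * f (z ^ n)) (ball (0 : ℂ) 1) ∧
    ((∫⁻ w in ball (0 : ℂ) 1,
        (‖f w‖₊ : ℝ≥0∞) ^ 2 * (‖w‖₊ : ℝ≥0∞) ^ (-(2 * ((n : ℝ) - i - 1) / n))) < ⊤ →
      ∫⁻ z in ball (0 : ℂ) 1, (‖(Real.sqrt n : ℂ) * z ^ i * f (z ^ n)‖₊ : ℝ≥0∞) ^ 2 =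
        ∫⁻ w in ball (0 : ℂ) 1,
          (‖f w‖₊ : ℝ≥0∞) ^ 2 * (‖w‖₊ : ℝ≥0∞) ^ (-(2 * ((n : ℝ) - i - 1) / n))) :=
  stmt13_general n hn i f hf
end
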